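/- Let pen be a real-valued polyhedral gauge on ℝ^p (pen(b) = max{⟨u_1,b⟩,…,⟨u_k,b⟩} with u_1 = 0), let X ∈ ℝ^{n×p} and λ > 0. Then S_{X,λpen}(y) is a singleton for every y ∈ ℝ^n if and only if every β ∈ ℝ^p with row(X) ∩ ∂pen(β) ≠ ∅ (i.e. every β with accessible pattern) has pattern complexity at most rank(X), i.e. the dimension of the linear span of C_β is at most rank(X). -/

import Mathlib

open scoped RealInnerProductSpace

noncomputable section

/-- Convert a plain coordinate vector to an element of Euclidean space. -/
def toEuc {n : ℕ} (v : Fin n → ℝ) : EuclideanSpace ℝ (Fin n) :=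
  (WithLp.equiv 2 (Fin n → ℝ)).symm v

/-- The subdifferential of `φ : ℝ^p → ℝ` at `β`:
`∂φ(β) = {s : φ(β) + ⟪s, b − β⟫ ≤ φ(b) for all b}`. -/
def subdiff {p : ℕ} (φ : EuclideanSpace ℝ (Fin p) → ℝ) (β : EuclideanSpace ℝ (Fin p)) :
    Set (EuclideanSpace ℝ (Fin p)) :=
  {s | ∀ b, φ β + ⟪s, b - β⟫ ≤ φ b}

/-- `S_{X,λpen}(y)`: the set of minimizers of `b ↦ (1/2)‖y − Xb‖₂² + λ·pen(b)`. -/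
def Smin {n p : ℕ} (X : Matrix (Fin n) (Fin p) ℝ) (lam : ℝ)
    (pen : EuclideanSpace ℝ (Fin p) → ℝ) (y : EuclideanSpace ℝ (Fin n)) :
    Set (EuclideanSpace ℝ (Fin p)) :=
  {b | ∀ b' : EuclideanSpace ℝ (Fin p), (1/2) * ‖y - toEuc (X.mulVec b)‖^2 + lam * pen b
        ≤ (1/2) * ‖y - toEuc (X.mulVec b')‖^2 + lam * pen b'}

/-- The row space of a matrix `X`: `{Xᵀz : z ∈ ℝ^n}`. -/
def rowSpace {n p : ℕ} (X : Matrix (Fin n) (Fin p) ℝ) : Set (EuclideanSpace ℝ (Fin p)) :=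
  Set.range fun z : EuclideanSpace ℝ (Fin n) => toEuc (X.transpose.mulVec z)

/-- The normal cone of a set `K` at `x`: `{s : ⟪s, b − x⟫ ≤ 0 for all b ∈ K}`. -/
def normalCone' {p : ℕ} (K : Set (EuclideanSpace ℝ (Fin p))) (x : EuclideanSpace ℝ (Fin p)) :
    Set (EuclideanSpace ℝ (Fin p)) :=
  {s | ∀ b ∈ K, ⟪s, b - x⟫ ≤ 0}

/-- The supremum norm `‖x‖_∞` on Euclidean space. -/
def supNorm {p : ℕ} (x : EuclideanSpace ℝ (Fin p)) : ℝ := ⨆ i, abs (x i)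

/-- `F` is an (exposed) face of `P`: `F = {x ∈ P : ⟪a,x⟫ = c}` for some valid inequality
`⟪a,x⟫ ≤ c` of `P`. -/
def IsFace {p : ℕ} (P F : Set (EuclideanSpace ℝ (Fin p))) : Prop :=
  ∃ (a : EuclideanSpace ℝ (Fin p)) (c : ℝ),
    (∀ x ∈ P, ⟪a, x⟫ ≤ c) ∧ F = {x ∈ P | ⟪a, x⟫ = c}

/-! Write `pen = polyGauge u`. The subdifferential `∂pen(β)` is a face of the polytope spanned
by the `u i`, and a small step `β + δ • c` selects the face of `∂pen(β)` maximizing `⟪·, c⟫`.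
Hence the pattern class of `β` spans the orthogonal complement of the direction `V_β` of
`∂pen(β)`.

If an accessible `β` had `dim (span C_β) > rank X`, some `d ≠ 0` in `V_βᗮ ∩ ker X` would make
`β` and `β + δ • d` two solutions for the same data, sharing the fit and a subgradient in `row X`.

Conversely, solutions exist (the objective is constant along a subspace and coercive on its
complement, after discarding the generators that a direction of `ker X` can push down). Given two
solutions `b₀ ≠ b₁`, their midpoint `m` has a subgradient in `row X` and `b₁ - b₀ ∈ ker X` is
orthogonal to the active generators at `m`. Descending through the faces of `∂pen(m)` that meet
`row X` (a supporting hyperplane at a relative boundary point yields a smaller face) gives an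
accessible `β` with `V_β ∩ row X = 0`; the complexity bound then forces `V_β + row X = ℝ^p`,
while `b₁ - b₀` is orthogonal to both.
-/

open Set Filter Topology

section ArgmaxSet

variable {ι : Type*}

def argmaxSet (S : Finset ι) (f : ι → ℝ) : Finset ι :=
  S.filter fun i => ∀ j ∈ S, f j ≤ f i

variable {S : Finset ι} {f : ι → ℝ} {i : ι}

lemma mem_argmaxSet : i ∈ argmaxSet S f ↔ i ∈ S ∧ ∀ j ∈ S, f j ≤ f i :=
  Finset.mem_filter

lemma argmaxSet_subset : argmaxSet S f ⊆ S :=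
  Finset.filter_subset _ _

lemma argmaxSet_nonempty (hS : S.Nonempty) : (argmaxSet S f).Nonempty := by
  obtain ⟨i, hi, h⟩ := S.exists_max_image f hS
  exact ⟨i, mem_argmaxSet.2 ⟨hi, h⟩⟩

lemma argmaxSet_eq_self_iff : argmaxSet S f = S ↔ ∀ i ∈ S, ∀ j ∈ S, f i = f j := by
  constructor
  · intro h i hi j hj
    rw [← h, mem_argmaxSet] at hi hj
    exact le_antisymm (hj.2 i hi.1) (hi.2 j hj.1)
  · intro h
    ext i
    exact ⟨fun hi => argmaxSet_subset hi,
      fun hi => mem_argmaxSet.2 ⟨hi, fun j hj => (h j hj i hi).le⟩⟩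

theorem eventually_argmaxSet_add_mul (S : Finset ι) (v w : ι → ℝ) :
    ∀ᶠ δ in 𝓝[>] (0 : ℝ),
      argmaxSet S (fun i => v i + δ * w i) = argmaxSet (argmaxSet S v) w := by
  have hstrict : ∀ᶠ δ in 𝓝 (0 : ℝ),
      ∀ i ∈ S, ∀ j ∈ S, v i < v j → v i + δ * w i < v j + δ * w j := by
    refine (eventually_all_finset S).2 fun i _ => (eventually_all_finset S).2 fun j _ => ?_
    by_cases hij : v i < v j
    · have hcont : Continuous fun δ : ℝ => v j + δ * w j - (v i + δ * w i) := by fun_prop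
      filter_upwards [continuousAt_const.eventually_lt hcont.continuousAt
        (show (0 : ℝ) < _ by simpa using hij)] with δ hδ _
      linarith
    · exact Eventually.of_forall fun _ h => absurd h hij
  filter_upwards [nhdsWithin_le_nhds hstrict, self_mem_nhdsWithin] with δ hδ (hδpos : 0 < δ)
  ext i
  simp only [mem_argmaxSet]
  constructor
  · rintro ⟨hiS, hi⟩
    have hvi : ∀ j ∈ S, v j ≤ v i := fun j hj =>
      not_lt.1 fun hlt => (hδ i hiS j hj hlt).not_ge (hi j hj)
    refine ⟨⟨hiS, hvi⟩, fun j ⟨hjS, hvj⟩ => ?_⟩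
    have hvij : v i = v j := le_antisymm (hvj i hiS) (hvi j hjS)
    exact le_of_mul_le_mul_left (by linarith [hi j hjS]) hδpos
  · rintro ⟨⟨hiS, hvi⟩, hwi⟩
    refine ⟨hiS, fun j hjS => ?_⟩
    rcases (hvi j hjS).lt_or_eq with hlt | heq
    · exact (hδ j hjS i hiS hlt).le
    · have := hwi j ⟨hjS, fun k hk => heq ▸ hvi k hk⟩
      rw [heq]
      gcongr

end ArgmaxSet

section PolyGauge

variable {ι E : Type*} [Fintype ι] [NormedAddCommGroup E] [InnerProductSpace ℝ E] (u : ι → E)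

def activeSet (x : E) : Finset ι :=
  argmaxSet Finset.univ fun i => ⟪u i, x⟫

theorem eventually_activeSet_add_smul (x c : E) :
    ∀ᶠ δ in 𝓝[>] (0 : ℝ),
      activeSet u (x + δ • c) = argmaxSet (activeSet u x) fun i => ⟪u i, c⟫ := by
  simpa only [activeSet, inner_add_right, real_inner_smul_right]
    using eventually_argmaxSet_add_mul Finset.univ (fun i => ⟪u i, x⟫) fun i => ⟪u i, c⟫

variable [Nonempty ι]

def polyGauge (x : E) : ℝ :=
  Finset.univ.sup' Finset.univ_nonempty fun i => ⟪u i, x⟫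

lemma inner_le_polyGauge (i : ι) (x : E) : ⟪u i, x⟫ ≤ polyGauge u x :=
  Finset.le_sup' (fun i => ⟪u i, x⟫) (Finset.mem_univ i)

lemma polyGauge_le_iff {x : E} {c : ℝ} : polyGauge u x ≤ c ↔ ∀ i, ⟪u i, x⟫ ≤ c := by
  simp [polyGauge]

lemma mem_activeSet {x : E} {i : ι} : i ∈ activeSet u x ↔ ⟪u i, x⟫ = polyGauge u x := by
  simp only [activeSet, mem_argmaxSet, Finset.mem_univ, true_and, forall_const]
  exact ⟨fun h => le_antisymm (inner_le_polyGauge u i x) ((polyGauge_le_iff u).2 h),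
    fun h j => h ▸ inner_le_polyGauge u j x⟩

lemma activeSet_nonempty (x : E) : (activeSet u x).Nonempty :=
  argmaxSet_nonempty Finset.univ_nonempty

lemma exists_polyGauge_eq_inner (x : E) : ∃ i, polyGauge u x = ⟪u i, x⟫ := by
  obtain ⟨i, hi⟩ := activeSet_nonempty u x
  exact ⟨i, ((mem_activeSet u).1 hi).symm⟩

lemma polyGauge_nonneg {i₀ : ι} (hu : u i₀ = 0) (x : E) : 0 ≤ polyGauge u x := by
  simpa [hu] using inner_le_polyGauge u i₀ x

lemma polyGauge_zero : polyGauge u 0 = 0 := by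
  obtain ⟨i, hi⟩ := exists_polyGauge_eq_inner u 0
  simp [hi]

lemma polyGauge_smul {t : ℝ} (ht : 0 ≤ t) (x : E) :
    polyGauge u (t • x) = t * polyGauge u x := by
  obtain ⟨i, hi⟩ := exists_polyGauge_eq_inner u x
  refine le_antisymm ((polyGauge_le_iff u).2 fun j => ?_) ?_
  · rw [real_inner_smul_right]
    exact mul_le_mul_of_nonneg_left (inner_le_polyGauge u j x) ht
  · rw [hi, ← real_inner_smul_right]
    exact inner_le_polyGauge u i _

lemma polyGauge_add_le (x y : E) : polyGauge u (x + y) ≤ polyGauge u x + polyGauge u y :=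
  (polyGauge_le_iff u).2 fun i => by
    rw [inner_add_right]
    exact add_le_add (inner_le_polyGauge u i x) (inner_le_polyGauge u i y)

lemma convexOn_polyGauge : ConvexOn ℝ univ (polyGauge u) :=
  ⟨convex_univ, fun x _ y _ a b ha hb _ => by
    simpa only [polyGauge_smul u ha, polyGauge_smul u hb, smul_eq_mul]
      using polyGauge_add_le u (a • x) (b • y)⟩

@[fun_prop]
lemma continuous_polyGauge : Continuous (polyGauge u) :=
  Continuous.finset_sup'_apply _ fun _ _ => continuous_const.inner continuous_id

lemma polyGauge_le_mul_norm (x : E) : polyGauge u x ≤ (∑ i, ‖u i‖) * ‖x‖ := by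
  obtain ⟨i, hi⟩ := exists_polyGauge_eq_inner u x
  rw [hi]
  calc ⟪u i, x⟫ ≤ ‖u i‖ * ‖x‖ := real_inner_le_norm _ _
    _ ≤ (∑ j, ‖u j‖) * ‖x‖ := by
      gcongr
      exact Finset.single_le_sum (fun j _ => norm_nonneg (u j)) (Finset.mem_univ i)

lemma inner_eq_of_mem_activeSet_midpoint {x y : E} {i : ι}
    (hx : polyGauge u x = polyGauge u ((1 / 2 : ℝ) • x + (1 / 2 : ℝ) • y))
    (hy : polyGauge u y = polyGauge u ((1 / 2 : ℝ) • x + (1 / 2 : ℝ) • y))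
    (hi : i ∈ activeSet u ((1 / 2 : ℝ) • x + (1 / 2 : ℝ) • y)) : ⟪u i, x⟫ = ⟪u i, y⟫ := by
  rw [mem_activeSet, inner_add_right, real_inner_smul_right, real_inner_smul_right] at hi
  linarith [inner_le_polyGauge u i x, inner_le_polyGauge u i y]

lemma eventually_polyGauge_add_smul_le {t : E} (ht : ∀ i, ⟪u i, t⟫ ≤ 0) {b : E} {M : ℝ}
    (hM : ∀ i, ⟪u i, t⟫ = 0 → ⟪u i, b⟫ ≤ M) : ∀ᶠ s : ℝ in atTop, polyGauge u (b + s • t) ≤ M := by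
  refine (eventually_all.2 fun i => ?_).mono fun s hs => (polyGauge_le_iff u).2 hs
  simp only [inner_add_right, real_inner_smul_right]
  rcases (ht i).lt_or_eq with hi | hi
  · filter_upwards [eventually_ge_atTop ((⟪u i, b⟫ - M) / -⟪u i, t⟫)] with s hs
    rw [div_le_iff₀ (neg_pos.2 hi)] at hs
    linarith
  · exact Eventually.of_forall fun s => by rw [hi, mul_zero, add_zero]; exact hM i hi

end PolyGauge

section InnerProductGeometry

variable {E : Type*} [NormedAddCommGroup E] [InnerProductSpace ℝ E]

lemma mem_orthogonal_vectorSpan_iff {G : Set E} {c : E} :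
    c ∈ (vectorSpan ℝ G)ᗮ ↔ ∀ g ∈ G, ∀ g' ∈ G, ⟪g, c⟫ = ⟪g', c⟫ := by
  constructor
  · intro h g hg g' hg'
    have := (Submodule.mem_orthogonal _ c).1 h (g - g') (vsub_mem_vectorSpan ℝ hg hg')
    rw [inner_sub_left] at this
    linarith
  · intro h
    have hle : vectorSpan ℝ G ≤ LinearMap.ker (innerₛₗ ℝ c) := by
      refine Submodule.span_le.2 ?_
      rintro _ ⟨g, hg, g', hg', rfl⟩
      change ⟪c, g - g'⟫ = 0
      rw [inner_sub_right, real_inner_comm g c, real_inner_comm g' c, h g hg g' hg',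
        sub_self]
    exact (Submodule.mem_orthogonal' _ c).2 fun v hv => hle hv

lemma exists_near_normal_of_notMem {G : Set E} (hGc : IsCompact G) (hGcv : Convex ℝ G)
    {x z : E} (hx : x ∈ G) (hz : z ∉ G) :
    ∃ y ∈ G, ‖x - y‖ ≤ 2 * ‖z - x‖ ∧ z - y ≠ 0 ∧ ∀ g ∈ G, ⟪z - y, g - y⟫ ≤ 0 := by
  obtain ⟨y, hy, hmin⟩ :=
    exists_norm_eq_iInf_of_complete_convex ⟨x, hx⟩ hGc.isComplete hGcv z
  refine ⟨y, hy, ?_, sub_ne_zero.2 fun h => hz (h ▸ hy),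
    (norm_eq_iInf_iff_real_inner_le_zero hGcv hy).1 hmin⟩
  have hzy : ‖z - y‖ ≤ ‖z - x‖ :=
    hmin ▸ ciInf_le ⟨0, forall_mem_range.2 fun _ => norm_nonneg _⟩ (⟨x, hx⟩ : G)
  calc ‖x - y‖ = ‖(z - y) - (z - x)‖ := by congr 1; abel
    _ ≤ ‖z - y‖ + ‖z - x‖ := norm_sub_le _ _
    _ ≤ 2 * ‖z - x‖ := by linarith

variable [FiniteDimensional ℝ E]

theorem exists_ne_zero_mem_vectorSpan_supporting {G : Set E} (hGc : IsCompact G)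
    (hGcv : Convex ℝ G) {x w : E} (hx : x ∈ G) (hw : w ∈ vectorSpan ℝ G)
    (hout : ∀ t : ℝ, 0 < t → x + t • w ∉ G) :
    ∃ c ∈ vectorSpan ℝ G, c ≠ 0 ∧ ∀ g ∈ G, ⟪c, g - x⟫ ≤ 0 := by
  set V := vectorSpan ℝ G
  -- `K` collects the boundary points of `G` together with their unit normals in `V`;
  -- its projection is compact and contains points arbitrarily close to `x`.
  set K : Set (E × E) :=
    {q | q.1 ∈ G ∧ q.2 ∈ V ∧ ‖q.2‖ = 1 ∧ ∀ g ∈ G, ⟪q.2, g - q.1⟫ ≤ 0}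
  have hKcl : IsClosed K := by
    have hK_eq : K = Prod.fst ⁻¹' G ∩ Prod.snd ⁻¹' V ∩ {q | ‖q.2‖ = 1}
        ∩ ⋂ g ∈ G, {q | ⟪q.2, g - q.1⟫ ≤ 0} := by
      ext q
      simp [K, and_assoc]
    rw [hK_eq]
    exact (((hGc.isClosed.preimage continuous_fst).inter
      (V.closed_of_finiteDimensional.preimage continuous_snd)).inter
        (isClosed_eq (by fun_prop) continuous_const)).inter
      (isClosed_biInter fun g _ => isClosed_le (by fun_prop) continuous_const)
  have hK : IsCompact K := (hGc.prod (isCompact_sphere (0 : E) 1)).of_isClosed_subset hKcl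
    fun q hq => ⟨hq.1, mem_sphere_zero_iff_norm.2 hq.2.2.1⟩
  suffices hxK : x ∈ Prod.fst '' K by
    obtain ⟨⟨x', c⟩, ⟨-, hcV, hc1, hc⟩, rfl⟩ := hxK
    exact ⟨c, hcV, norm_ne_zero_iff.1 (hc1 ▸ one_ne_zero), hc⟩
  refine (hK.image continuous_fst).isClosed.closure_subset
    (Metric.mem_closure_iff.2 fun ε hε => ?_)
  set t := ε / (2 * (‖w‖ + 1))
  have ht : 0 < t := by positivity
  obtain ⟨y, hy, hxy, hne, hnormal⟩ := exists_near_normal_of_notMem hGc hGcv hx (hout t ht)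
  refine ⟨y, ⟨(y, ‖x + t • w - y‖⁻¹ • (x + t • w - y)), ⟨hy, ?_, ?_, fun g hg => ?_⟩, rfl⟩,
    ?_⟩
  · have hsplit : x + t • w - y = (x -ᵥ y) + t • w := by rw [vsub_eq_sub]; abel
    rw [hsplit]
    exact V.smul_mem _ (V.add_mem (vsub_mem_vectorSpan ℝ hx hy) (V.smul_mem t hw))
  · exact norm_smul_inv_norm hne
  · rw [real_inner_smul_left]
    exact mul_nonpos_of_nonneg_of_nonpos (by positivity) (hnormal g hg)
  · rw [dist_eq_norm]
    calc ‖x - y‖ ≤ 2 * ‖x + t • w - x‖ := hxy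
      _ = 2 * t * ‖w‖ := by rw [add_sub_cancel_left, norm_smul, Real.norm_of_nonneg ht.le]; ring
      _ < ε := by
        rw [show 2 * t * ‖w‖ = ε * (‖w‖ / (‖w‖ + 1)) by simp only [t]; field_simp]
        exact mul_lt_of_lt_one_right hε ((div_lt_one (by positivity)).2 (lt_add_one _))

lemma inf_orthogonal_ne_bot_of_finrank_lt {S R : Submodule ℝ E}
    (h : Module.finrank ℝ R < Module.finrank ℝ S) : S ⊓ Rᗮ ≠ ⊥ := by
  intro hbot
  have h1 := Submodule.finrank_sup_add_finrank_inf_eq S Rᗮ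
  rw [hbot, finrank_bot, add_zero] at h1
  have h2 := R.finrank_add_finrank_orthogonal
  have h3 := (S ⊔ Rᗮ).finrank_le
  omega

lemma orthogonal_inf_orthogonal_eq_bot {V R : Submodule ℝ E} (hVR : V ⊓ R = ⊥)
    (h : Module.finrank ℝ Vᗮ ≤ Module.finrank ℝ R) : Vᗮ ⊓ Rᗮ = ⊥ := by
  rw [Submodule.inf_orthogonal, Submodule.orthogonal_eq_bot_iff]
  apply Submodule.eq_top_of_finrank_eq
  have h1 := Submodule.finrank_sup_add_finrank_inf_eq V R
  rw [hVR, finrank_bot, add_zero] at h1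
  have h2 := V.finrank_add_finrank_orthogonal
  have h3 := (V ⊔ R).finrank_le
  omega

end InnerProductGeometry

section Existence

variable {E F : Type*} [NormedAddCommGroup E] [InnerProductSpace ℝ E] [FiniteDimensional ℝ E]
  [NormedAddCommGroup F] [InnerProductSpace ℝ F]

lemma exists_pos_mul_norm_le {h : E → ℝ} (hc : Continuous h)
    (hhom : ∀ t : ℝ, 0 < t → ∀ x, h (t • x) = t * h x) (K : Submodule ℝ E)
    (hpos : ∀ x ∈ K, x ≠ 0 → 0 < h x) : ∃ δ > 0, ∀ x ∈ K, δ * ‖x‖ ≤ h x := by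
  have h0 : h 0 = 0 := by
    have := hhom 2 two_pos 0
    rw [smul_zero] at this
    linarith
  have hunit : ∀ x ∈ K, x ≠ 0 → ‖x‖⁻¹ • x ∈ Metric.sphere (0 : E) 1 ∩ K := fun x hx hx0 =>
    ⟨mem_sphere_zero_iff_norm.2 (norm_smul_inv_norm hx0), K.smul_mem _ hx⟩
  rcases (Metric.sphere (0 : E) 1 ∩ K).eq_empty_or_nonempty with hS | hS
  · refine ⟨1, one_pos, fun x hx => ?_⟩
    rcases eq_or_ne x 0 with rfl | hx0
    · simp [h0]
    · exact absurd (hunit x hx hx0) (hS ▸ notMem_empty _)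
  obtain ⟨x₀, hx₀, hmin⟩ := ((isCompact_sphere (0 : E) 1).inter_right
    K.closed_of_finiteDimensional).exists_isMinOn hS hc.continuousOn
  refine ⟨h x₀, hpos x₀ hx₀.2 (ne_zero_of_mem_unit_sphere ⟨x₀, hx₀.1⟩), fun x hx => ?_⟩
  rcases eq_or_ne x 0 with rfl | hx0
  · simp [h0]
  have hle : h x₀ ≤ ‖x‖⁻¹ * h x :=
    hhom _ (inv_pos.2 (norm_pos_iff.2 hx0)) x ▸ hmin (hunit x hx hx0)
  calc h x₀ * ‖x‖ ≤ ‖x‖⁻¹ * h x * ‖x‖ := mul_le_mul_of_nonneg_right hle (norm_nonneg _)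
    _ = h x := by field_simp

lemma exists_forall_le_of_invariant {f : E → ℝ} (hf : Continuous f) (R : Submodule ℝ E)
    (hR : ∀ b, ∀ r ∈ R, f (b + r) = f b)
    (hbdd : Bornology.IsBounded {b | b ∈ Rᗮ ∧ f b ≤ f 0}) : ∃ b, ∀ b', f b ≤ f b' := by
  have hS : IsCompact {b | b ∈ Rᗮ ∧ f b ≤ f 0} := Metric.isCompact_of_isClosed_isBounded
    (Rᗮ.closed_of_finiteDimensional.inter (isClosed_le hf continuous_const)) hbdd
  obtain ⟨b, -, hbmin⟩ := hS.exists_isMinOn ⟨0, Rᗮ.zero_mem, le_rfl⟩ hf.continuousOn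
  refine ⟨b, fun b' => ?_⟩
  obtain ⟨r, hr, w, hw, rfl⟩ := R.exists_add_mem_mem_orthogonal b'
  rw [add_comm, hR w r hr]
  by_cases hw0 : f w ≤ f 0
  · exact hbmin ⟨hw, hw0⟩
  · exact (hbmin ⟨Rᗮ.zero_mem, le_rfl⟩).trans (le_of_not_ge hw0)

variable (A : E →ₗ[ℝ] F) (y : F) {lam : ℝ}

lemma exists_forall_le_of_forall_ker_inner_eq {ι : Type*} [Fintype ι] [Nonempty ι] {u : ι → E}
    {i₀ : ι} (hu : u i₀ = 0) (hlam : 0 < lam)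
    (hdesc : ∀ t, A t = 0 → (∀ i, ⟪u i, t⟫ ≤ 0) → ∀ i, ⟪u i, t⟫ = 0) :
    ∃ b, ∀ b', 1 / 2 * ‖y - A b‖ ^ 2 + lam * polyGauge u b
      ≤ 1 / 2 * ‖y - A b'‖ ^ 2 + lam * polyGauge u b' := by
  -- the objective is invariant under `R` and, by `hdesc`, coercive on `Rᗮ`
  set R : Submodule ℝ E := LinearMap.ker A ⊓ ⨅ i, LinearMap.ker (innerₛₗ ℝ (u i))
  have hmemR : ∀ t, t ∈ R ↔ A t = 0 ∧ ∀ i, ⟪u i, t⟫ = 0 := by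
    simp [R, Submodule.mem_iInf]
  have hAc : Continuous A := A.continuous_of_finiteDimensional
  apply exists_forall_le_of_invariant (by fun_prop) R
  · intro b r hr
    rw [hmemR] at hr
    have hpen : polyGauge u (b + r) = polyGauge u b := by
      simp only [polyGauge, inner_add_right, hr.2, add_zero]
    rw [map_add, hr.1, add_zero, hpen]
  obtain ⟨δ, hδ, hδle⟩ := exists_pos_mul_norm_le (h := fun b => max ‖A b‖ (polyGauge u b))
    (hAc.norm.max (continuous_polyGauge u))
    (fun t ht x => by rw [map_smul, norm_smul, Real.norm_of_nonneg ht.le,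
      polyGauge_smul u ht.le, mul_max_of_nonneg _ _ ht.le]) Rᗮ
    (fun x hxR hx0 => by
      by_contra! hle
      have hAx : A x = 0 := norm_le_zero_iff.1 ((le_max_left _ _).trans hle)
      have hux := (polyGauge_le_iff u).1 ((le_max_right _ _).trans hle)
      have hxR' : x ∈ R := (hmemR x).2 ⟨hAx, hdesc x hAx hux⟩
      exact hx0 ((Submodule.mem_bot ℝ).1
        (R.inf_orthogonal_eq_bot ▸ Submodule.mem_inf.2 ⟨hxR', hxR⟩)))
  refine isBounded_iff_forall_norm_le.2
    ⟨max (2 * ‖y‖) (‖y‖ ^ 2 / (2 * lam)) / δ, fun b ⟨hbR, hb⟩ => ?_⟩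
  simp only [map_zero, sub_zero, polyGauge_zero, mul_zero, add_zero] at hb
  have hpen := polyGauge_nonneg u hu b
  rw [le_div_iff₀ hδ, mul_comm]
  refine (hδle b hbR).trans (max_le_max ?_ ?_)
  · have hres : ‖y - A b‖ ≤ ‖y‖ := by nlinarith [norm_nonneg (y - A b), norm_nonneg y]
    calc ‖A b‖ = ‖y - (y - A b)‖ := by rw [sub_sub_cancel]
      _ ≤ ‖y‖ + ‖y - A b‖ := norm_sub_le _ _
      _ ≤ 2 * ‖y‖ := by linarith
  · rw [le_div_iff₀ (by positivity)]
    nlinarith [sq_nonneg ‖y - A b‖]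

theorem exists_forall_le_sq_norm_add_polyGauge (hlam : 0 < lam) (ι : Type*) [Fintype ι]
    [Nonempty ι] (u : ι → E) {i₀ : ι} (hu : u i₀ = 0) :
    ∃ b, ∀ b', 1 / 2 * ‖y - A b‖ ^ 2 + lam * polyGauge u b
      ≤ 1 / 2 * ‖y - A b'‖ ^ 2 + lam * polyGauge u b' := by
  induction hN : Fintype.card ι using Nat.strong_induction_on generalizing ι with
  | _ N ih =>
  by_cases hdesc : ∀ t, A t = 0 → (∀ i, ⟪u i, t⟫ ≤ 0) → ∀ i, ⟪u i, t⟫ = 0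
  · exact exists_forall_le_of_forall_ker_inner_eq A y hu hlam hdesc
  -- a direction `t` in `ker A` that lowers some generator lets us drop that generator
  push Not at hdesc
  obtain ⟨t, hAt, hle, j, hj⟩ := hdesc
  have hi₀ : ⟪u i₀, t⟫ = 0 := by rw [hu, inner_zero_left]
  have : Nonempty {i // ⟪u i, t⟫ = 0} := ⟨⟨i₀, hi₀⟩⟩
  obtain ⟨b, hb⟩ := ih _ (hN ▸ Fintype.card_subtype_lt hj) {i // ⟪u i, t⟫ = 0}
    (fun i => u i) (i₀ := ⟨i₀, hi₀⟩) hu rfl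
  obtain ⟨s, hs⟩ := (eventually_polyGauge_add_smul_le u hle fun i hi =>
    inner_le_polyGauge (fun i : {i // ⟪u i, t⟫ = 0} => u i) ⟨i, hi⟩ b).exists
  refine ⟨b + s • t, fun b' => ?_⟩
  have hsub : polyGauge (fun i : {i // ⟪u i, t⟫ = 0} => u i) b' ≤ polyGauge u b' :=
    (polyGauge_le_iff _).2 fun i => inner_le_polyGauge u i b'
  rw [map_add, map_smul, hAt, smul_zero, add_zero]
  nlinarith [hb b', mul_le_mul_of_nonneg_left hs hlam.le, mul_le_mul_of_nonneg_left hsub hlam.le]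

end Existence

section Subdiff

variable {p : ℕ}

lemma convex_subdiff (φ : EuclideanSpace ℝ (Fin p) → ℝ) (β : EuclideanSpace ℝ (Fin p)) :
    Convex ℝ (subdiff φ β) := by
  intro s hs t ht a b ha hb hab b'
  have h1 := mul_le_mul_of_nonneg_left (hs b') ha
  have h2 := mul_le_mul_of_nonneg_left (ht b') hb
  rw [inner_add_left, real_inner_smul_left, real_inner_smul_left]
  linear_combination h1 + h2 + (φ b' - φ β) * hab

lemma isClosed_subdiff (φ : EuclideanSpace ℝ (Fin p) → ℝ) (β : EuclideanSpace ℝ (Fin p)) :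
    IsClosed (subdiff φ β) := by
  simp only [subdiff, ofPred_forall]
  exact isClosed_iInter fun b =>
    isClosed_le (continuous_const.add (continuous_id.inner continuous_const)) continuous_const

variable {ι : Type*} [Fintype ι] [Nonempty ι] (u : ι → EuclideanSpace ℝ (Fin p))

lemma mem_subdiff_polyGauge_iff {x s : EuclideanSpace ℝ (Fin p)} :
    s ∈ subdiff (polyGauge u) x ↔
      (∀ b, ⟪s, b⟫ ≤ polyGauge u b) ∧ ⟪s, x⟫ = polyGauge u x := by
  constructor
  · intro h
    have h0 := h 0
    have h2 := h ((2 : ℝ) • x)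
    rw [polyGauge_zero, zero_sub, inner_neg_right] at h0
    rw [polyGauge_smul u zero_le_two, two_smul, add_sub_cancel_right] at h2
    refine ⟨fun b => ?_, by linarith⟩
    have := h b
    rw [inner_sub_right] at this
    linarith
  · rintro ⟨hle, heq⟩ b
    rw [inner_sub_right, heq]
    linarith [hle b]

lemma mem_subdiff_polyGauge_of_mem_activeSet {x : EuclideanSpace ℝ (Fin p)} {i : ι}
    (hi : i ∈ activeSet u x) : u i ∈ subdiff (polyGauge u) x :=
  (mem_subdiff_polyGauge_iff u).2 ⟨inner_le_polyGauge u i, (mem_activeSet u).1 hi⟩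

lemma isCompact_subdiff_polyGauge (x : EuclideanSpace ℝ (Fin p)) :
    IsCompact (subdiff (polyGauge u) x) := by
  have hbound : ∀ s ∈ subdiff (polyGauge u) x, ‖s‖ ≤ ∑ i, ‖u i‖ := by
    intro s hs
    have h := ((mem_subdiff_polyGauge_iff u).1 hs).1 s
    rw [real_inner_self_eq_norm_sq, sq] at h
    by_contra! hlt
    have hpos : 0 < ‖s‖ := (Finset.sum_nonneg fun i _ => norm_nonneg (u i)).trans_lt hlt
    exact (mul_lt_mul_of_pos_right hlt hpos).not_ge (h.trans (polyGauge_le_mul_norm u s))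
  exact Metric.isCompact_of_isClosed_isBounded (isClosed_subdiff _ x)
    (isBounded_iff_forall_norm_le.2 ⟨_, hbound⟩)

lemma exists_mem_activeSet_inner_le {x s : EuclideanSpace ℝ (Fin p)}
    (hs : s ∈ subdiff (polyGauge u) x) (c : EuclideanSpace ℝ (Fin p)) :
    ∃ i ∈ activeSet u x, ⟪s, c⟫ ≤ ⟪u i, c⟫ := by
  obtain ⟨δ, hδI, hδ⟩ := ((eventually_activeSet_add_smul u x c).and self_mem_nhdsWithin).exists
  obtain ⟨i, hi⟩ := activeSet_nonempty u (x + δ • c)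
  refine ⟨i, argmaxSet_subset (hδI ▸ hi), ?_⟩
  have hpen := (mem_activeSet u).1 hi
  have hle := ((mem_subdiff_polyGauge_iff u).1 hs).1 (x + δ • c)
  rw [← hpen, inner_add_right, inner_add_right, real_inner_smul_right, real_inner_smul_right,
    ((mem_subdiff_polyGauge_iff u).1 hs).2,
    (mem_activeSet u).1 (argmaxSet_subset (hδI ▸ hi))] at hle
  exact le_of_mul_le_mul_left (by linarith) (show (0 : ℝ) < δ from hδ)

lemma inner_eq_of_mem_subdiff {x s c : EuclideanSpace ℝ (Fin p)} {κ : ℝ}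
    (hs : s ∈ subdiff (polyGauge u) x) (hc : ∀ i ∈ activeSet u x, ⟪u i, c⟫ = κ) :
    ⟪s, c⟫ = κ := by
  obtain ⟨i, hi, hle⟩ := exists_mem_activeSet_inner_le u hs c
  obtain ⟨j, hj, hge⟩ := exists_mem_activeSet_inner_le u hs (-c)
  simp only [inner_neg_right, neg_le_neg_iff] at hge
  linarith [hc i hi, hc j hj]

lemma eventually_mem_subdiff_add_smul {x s c : EuclideanSpace ℝ (Fin p)}
    (hs : s ∈ subdiff (polyGauge u) x) (hc : ∀ i ∈ activeSet u x, ⟪u i, c⟫ ≤ ⟪s, c⟫) :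
    ∀ᶠ δ in 𝓝[>] (0 : ℝ), s ∈ subdiff (polyGauge u) (x + δ • c) := by
  filter_upwards [eventually_activeSet_add_smul u x c, self_mem_nhdsWithin]
    with δ hδI (hδ : 0 < δ)
  obtain ⟨i, hi⟩ := activeSet_nonempty u (x + δ • c)
  have hix := argmaxSet_subset (hδI ▸ hi)
  rw [mem_subdiff_polyGauge_iff] at hs ⊢
  refine ⟨hs.1, le_antisymm (hs.1 _) ?_⟩
  rw [← (mem_activeSet u).1 hi, inner_add_right, inner_add_right, real_inner_smul_right,
    real_inner_smul_right, (mem_activeSet u).1 hix, hs.2]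
  gcongr
  exact hc i hix

lemma subdiff_polyGauge_congr {x y : EuclideanSpace ℝ (Fin p)}
    (h : activeSet u x = activeSet u y) :
    subdiff (polyGauge u) x = subdiff (polyGauge u) y := by
  suffices key : ∀ x y, activeSet u x = activeSet u y →
      subdiff (polyGauge u) x ⊆ subdiff (polyGauge u) y from
    (key x y h).antisymm (key y x h.symm)
  intro x y h s hs
  obtain ⟨i, hi, hle⟩ := exists_mem_activeSet_inner_le u hs (-y)
  rw [h, mem_activeSet] at hi
  rw [mem_subdiff_polyGauge_iff] at hs ⊢
  simp only [inner_neg_right, neg_le_neg_iff] at hle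
  exact ⟨hs.1, le_antisymm (hs.1 y) (hi ▸ hle)⟩

end Subdiff

section PatternClass

variable {p : ℕ} {ι : Type*} [Fintype ι] [Nonempty ι] (u : ι → EuclideanSpace ℝ (Fin p))

lemma eventually_subdiff_add_smul_eq {β t : EuclideanSpace ℝ (Fin p)}
    (ht : t ∈ (vectorSpan ℝ (subdiff (polyGauge u) β))ᗮ) :
    ∀ᶠ δ in 𝓝[>] (0 : ℝ), subdiff (polyGauge u) (β + δ • t) = subdiff (polyGauge u) β := by
  have hconst : ∀ i ∈ activeSet u β, ∀ j ∈ activeSet u β, ⟪u i, t⟫ = ⟪u j, t⟫ :=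
    fun i hi j hj => mem_orthogonal_vectorSpan_iff.1 ht _
      (mem_subdiff_polyGauge_of_mem_activeSet u hi) _
      (mem_subdiff_polyGauge_of_mem_activeSet u hj)
  filter_upwards [eventually_activeSet_add_smul u β t] with δ hδ
  exact subdiff_polyGauge_congr u (hδ.trans (argmaxSet_eq_self_iff.2 hconst))

theorem span_setOf_subdiff_eq (β : EuclideanSpace ℝ (Fin p)) :
    Submodule.span ℝ {x | subdiff (polyGauge u) x = subdiff (polyGauge u) β}
      = (vectorSpan ℝ (subdiff (polyGauge u) β))ᗮ := by
  apply le_antisymm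
  · refine Submodule.span_le.2 fun x (hx : subdiff _ x = _) =>
      mem_orthogonal_vectorSpan_iff.2 fun g hg g' hg' => ?_
    rw [← hx, mem_subdiff_polyGauge_iff] at hg hg'
    exact hg.2.trans hg'.2.symm
  · intro t ht
    obtain ⟨δ, hδ, hδpos⟩ :=
      ((eventually_subdiff_add_smul_eq u ht).and self_mem_nhdsWithin).exists
    have ht_eq : t = δ⁻¹ • ((β + δ • t) - β) := by
      rw [add_sub_cancel_left, smul_smul, inv_mul_cancel₀ (ne_of_gt hδpos), one_smul]
    rw [ht_eq]
    exact Submodule.smul_mem _ _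
      (Submodule.sub_mem _ (Submodule.subset_span hδ) (Submodule.subset_span rfl))

end PatternClass

section Faces

variable {p : ℕ} {ι : Type*} [Fintype ι] [Nonempty ι] (u : ι → EuclideanSpace ℝ (Fin p))
  (W : Submodule ℝ (EuclideanSpace ℝ (Fin p)))

lemma exists_activeSet_ssubset_subdiff_inter_nonempty {β : EuclideanSpace ℝ (Fin p)}
    (hβ : (subdiff (polyGauge u) β ∩ W).Nonempty)
    (hW : vectorSpan ℝ (subdiff (polyGauge u) β) ⊓ W ≠ ⊥) :
    ∃ β', activeSet u β' ⊂ activeSet u β ∧ (subdiff (polyGauge u) β' ∩ W).Nonempty := by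
  set G := subdiff (polyGauge u) β
  have hGc : IsCompact G := isCompact_subdiff_polyGauge u β
  obtain ⟨w, hwmem, hw0⟩ := Submodule.exists_mem_ne_zero_of_ne_bot hW
  obtain ⟨hwV, hwW⟩ := Submodule.mem_inf.1 hwmem
  obtain ⟨e, ⟨heG, heW⟩, hemax⟩ := (hGc.inter_right W.closed_of_finiteDimensional).exists_isMaxOn
    hβ (by fun_prop : Continuous fun v => ⟪w, v⟫).continuousOn
  have hout : ∀ t : ℝ, 0 < t → e + t • w ∉ G := fun t ht hmem => by
    have hle : ⟪w, e + t • w⟫ ≤ ⟪w, e⟫ := hemax ⟨hmem, W.add_mem heW (W.smul_mem t hwW)⟩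
    rw [inner_add_right, real_inner_smul_right, real_inner_self_eq_norm_sq] at hle
    have : 0 < t * ‖w‖ ^ 2 := by positivity
    linarith
  obtain ⟨c, hcV, hc0, hc⟩ :=
    exists_ne_zero_mem_vectorSpan_supporting hGc (convex_subdiff _ β) heG hwV hout
  have hcu : ∀ i ∈ activeSet u β, ⟪u i, c⟫ ≤ ⟪e, c⟫ := fun i hi => by
    have := hc _ (mem_subdiff_polyGauge_of_mem_activeSet u hi)
    rw [inner_sub_right, real_inner_comm (u i) c, real_inner_comm e c] at this
    linarith
  obtain ⟨δ, heδ, hIδ⟩ := ((eventually_mem_subdiff_add_smul u heG hcu).and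
    (eventually_activeSet_add_smul u β c)).exists
  refine ⟨β + δ • c, ?_, e, heδ, heW⟩
  rw [hIδ, Finset.ssubset_iff_subset_ne]
  refine ⟨argmaxSet_subset, fun heq => hc0 ?_⟩
  -- otherwise `⟪u i, c⟫` is constant on the active set, so `⟪·, c⟫` is constant on `G`: `c ⊥ c`
  obtain ⟨i₀, hi₀⟩ := activeSet_nonempty u β
  have hG : ∀ g ∈ G, ⟪g, c⟫ = ⟪u i₀, c⟫ := fun g hg =>
    inner_eq_of_mem_subdiff u hg fun i hi => argmaxSet_eq_self_iff.1 heq i hi i₀ hi₀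
  have hperp : c ∈ (vectorSpan ℝ G)ᗮ :=
    mem_orthogonal_vectorSpan_iff.2 fun g hg g' hg' => (hG g hg).trans (hG g' hg').symm
  exact inner_self_eq_zero.1 ((Submodule.mem_orthogonal' _ c).1 hperp c hcV)

theorem exists_subdiff_inter_nonempty_vectorSpan_inf_eq_bot {β : EuclideanSpace ℝ (Fin p)}
    (hβ : (subdiff (polyGauge u) β ∩ W).Nonempty) :
    ∃ β', activeSet u β' ⊆ activeSet u β ∧ (subdiff (polyGauge u) β' ∩ W).Nonempty ∧
      vectorSpan ℝ (subdiff (polyGauge u) β') ⊓ W = ⊥ := by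
  induction hn : (activeSet u β).card using Nat.strong_induction_on generalizing β with
  | _ n ih =>
  by_cases hW : vectorSpan ℝ (subdiff (polyGauge u) β) ⊓ W = ⊥
  · exact ⟨β, subset_rfl, hβ, hW⟩
  obtain ⟨β₁, hβ₁, hβ₁W⟩ := exists_activeSet_ssubset_subdiff_inter_nonempty u W hβ hW
  obtain ⟨β', h', hβ'W, hbot⟩ := ih _ (hn ▸ Finset.card_lt_card hβ₁) hβ₁W rfl
  exact ⟨β', h'.trans hβ₁.subset, hβ'W, hbot⟩

end Faces

lemma le_of_forall_le_add_mul {a b K : ℝ} (h : ∀ t : ℝ, 0 < t → t ≤ 1 → a ≤ b + t * K) :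
    a ≤ b := by
  have hlim : Tendsto (fun t : ℝ => b + t * K) (𝓝[>] 0) (𝓝 b) := by
    have : Tendsto (fun t : ℝ => b + t * K) (𝓝 0) (𝓝 (b + 0 * K)) :=
      (continuous_const.add (continuous_id.mul continuous_const)).tendsto 0
    simpa using this.mono_left nhdsWithin_le_nhds
  exact ge_of_tendsto hlim (by
    filter_upwards [Ioc_mem_nhdsGT zero_lt_one] with t ht using h t ht.1 ht.2)

section Lasso

open Matrix

variable {n p : ℕ} (X : Matrix (Fin n) (Fin p) ℝ) {lam : ℝ}
  {pen : EuclideanSpace ℝ (Fin p) → ℝ} {y : EuclideanSpace ℝ (Fin n)}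

lemma toEuc_mulVec (b : EuclideanSpace ℝ (Fin p)) : toEuc (X.mulVec b) = toEuclideanLin X b :=
  rfl

lemma toEuc_transpose_mulVec (z : EuclideanSpace ℝ (Fin n)) :
    toEuc (Xᵀ.mulVec z) = (toEuclideanLin X).adjoint z := by
  rw [← toEuclideanLin_conjTranspose_eq_adjoint, conjTranspose_eq_transpose_of_trivial]
  rfl

lemma rowSpace_eq_range_adjoint : rowSpace X = LinearMap.range (toEuclideanLin X).adjoint := by
  ext s
  simp [rowSpace, toEuc_transpose_mulVec]

lemma rank_eq_finrank_range_adjoint :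
    X.rank = Module.finrank ℝ (LinearMap.range (toEuclideanLin X).adjoint) := by
  rw [LinearMap.finrank_range_adjoint,
    rank_eq_finrank_range_toLin X (PiLp.basisFun 2 ℝ (Fin n)) (PiLp.basisFun 2 ℝ (Fin p))]
  rfl

lemma mem_Smin_of_adjoint_eq_smul (hlam : 0 ≤ lam) {b s : EuclideanSpace ℝ (Fin p)}
    (hs : s ∈ subdiff pen b)
    (h : (toEuclideanLin X).adjoint (y - toEuclideanLin X b) = lam • s) :
    b ∈ Smin X lam pen y := by
  intro b'
  set L := toEuclideanLin X
  show 1 / 2 * ‖y - L b‖ ^ 2 + lam * pen b ≤ 1 / 2 * ‖y - L b'‖ ^ 2 + lam * pen b'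
  have hsplit : y - L b' = (y - L b) - L (b' - b) := by rw [map_sub]; abel
  have hinner : ⟪y - L b, L (b' - b)⟫ = lam * ⟪s, b' - b⟫ := by
    rw [← LinearMap.adjoint_inner_left, h, real_inner_smul_left]
  rw [hsplit, norm_sub_sq_real (y - L b), hinner]
  nlinarith [sq_nonneg ‖L (b' - b)‖, mul_le_mul_of_nonneg_left (hs b') hlam]

lemma smul_adjoint_mem_subdiff_of_mem_Smin (hpen : ConvexOn ℝ univ pen) (hlam : 0 < lam)
    {b : EuclideanSpace ℝ (Fin p)} (hb : b ∈ Smin X lam pen y) :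
    lam⁻¹ • (toEuclideanLin X).adjoint (y - toEuclideanLin X b) ∈ subdiff pen b := by
  intro c
  set L := toEuclideanLin X
  set r := y - L b
  have key : ∀ t : ℝ, 0 < t → t ≤ 1 →
      ⟪r, L (c - b)⟫ ≤ lam * (pen c - pen b) + t * (‖L (c - b)‖ ^ 2 / 2) := by
    intro t ht0 ht1
    have hmin : 1 / 2 * ‖r‖ ^ 2 + lam * pen b
        ≤ 1 / 2 * ‖r - t • L (c - b)‖ ^ 2 + lam * pen (b + t • (c - b)) := by
      have h := hb (b + t • (c - b))
      rwa [toEuc_mulVec, toEuc_mulVec, map_add, map_smul, ← sub_sub] at h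
    have hconv : pen (b + t • (c - b)) ≤ (1 - t) * pen b + t * pen c := by
      have := hpen.2 (mem_univ b) (mem_univ c) (sub_nonneg.2 ht1) ht0.le (by ring)
      rw [show (1 - t) • b + t • c = b + t • (c - b) by module] at this
      simpa using this
    rw [norm_sub_sq_real r, real_inner_smul_right, norm_smul, Real.norm_of_nonneg ht0.le] at hmin
    have := mul_le_mul_of_nonneg_left hconv hlam.le
    nlinarith
  have hlim := mul_le_mul_of_nonneg_left (le_of_forall_le_add_mul key) (inv_nonneg.2 hlam.le)
  rw [inv_mul_cancel_left₀ hlam.ne'] at hlim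
  rw [real_inner_smul_left, LinearMap.adjoint_inner_left]
  linarith

lemma map_eq_of_mem_Smin (hpen : ConvexOn ℝ univ pen) (hlam : 0 < lam)
    (h₀ : b₀ ∈ Smin X lam pen y) (h₁ : b₁ ∈ Smin X lam pen y) :
    toEuclideanLin X b₀ = toEuclideanLin X b₁ := by
  set L := toEuclideanLin X
  -- the midpoint would do strictly better unless the two fits agree
  have hm := h₀ ((1 / 2 : ℝ) • b₀ + (1 / 2 : ℝ) • b₁)
  have h01 := h₀ b₁
  have h10 := h₁ b₀
  have hconv := hpen.2 (mem_univ b₀) (mem_univ b₁) (by norm_num : (0 : ℝ) ≤ 1 / 2)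
    (by norm_num : (0 : ℝ) ≤ 1 / 2) (by norm_num)
  simp only [smul_eq_mul] at hconv
  have hres : y - L ((1 / 2 : ℝ) • b₀ + (1 / 2 : ℝ) • b₁)
      = (1 / 2 : ℝ) • ((y - L b₀) + (y - L b₁)) := by
    rw [map_add, map_smul, map_smul]
    module
  rw [toEuc_mulVec, toEuc_mulVec, hres, norm_smul, mul_pow] at hm
  have hpar := parallelogram_law_with_norm ℝ (y - L b₀) (y - L b₁)
  rw [sub_sub_sub_cancel_left] at hpar
  rw [toEuc_mulVec, toEuc_mulVec] at h01 h10
  have hsq : ‖L b₁ - L b₀‖ ^ 2 ≤ 0 := by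
    norm_num at hm
    nlinarith
  exact (sub_eq_zero.1 (norm_eq_zero.1
    ((pow_eq_zero_iff two_ne_zero).1 (le_antisymm hsq (sq_nonneg _))))).symm

lemma pen_eq_of_mem_Smin (hpen : ConvexOn ℝ univ pen) (hlam : 0 < lam)
    (h₀ : b₀ ∈ Smin X lam pen y) (h₁ : b₁ ∈ Smin X lam pen y) : pen b₀ = pen b₁ := by
  have h01 := h₀ b₁
  have h10 := h₁ b₀
  rw [toEuc_mulVec, toEuc_mulVec, map_eq_of_mem_Smin X hpen hlam h₀ h₁] at h01 h10
  exact mul_left_cancel₀ hlam.ne' (by linarith)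

lemma convex_Smin (hpen : ConvexOn ℝ univ pen) (hlam : 0 < lam) :
    Convex ℝ (Smin X lam pen y) := by
  intro b₀ h₀ b₁ h₁ a b ha hb hab b'
  have hL : toEuclideanLin X (a • b₀ + b • b₁) = toEuclideanLin X b₀ := by
    rw [map_add, map_smul, map_smul, ← map_eq_of_mem_Smin X hpen hlam h₀ h₁, ← add_smul, hab,
      one_smul]
  have hconv := hpen.2 (mem_univ b₀) (mem_univ b₁) ha hb hab
  rw [smul_eq_mul, smul_eq_mul, ← pen_eq_of_mem_Smin X hpen hlam h₀ h₁, ← add_mul, hab,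
    one_mul] at hconv
  have := h₀ b'
  rw [toEuc_mulVec] at this ⊢
  rw [hL]
  nlinarith

end Lasso

section Main

open Matrix

variable {n p : ℕ} {ι : Type*} [Fintype ι] [Nonempty ι] (u : ι → EuclideanSpace ℝ (Fin p))
  (X : Matrix (Fin n) (Fin p) ℝ) {lam : ℝ}

lemma Smin_polyGauge_nonempty {i₀ : ι} (hu : u i₀ = 0) (hlam : 0 < lam)
    (y : EuclideanSpace ℝ (Fin n)) : (Smin X lam (polyGauge u) y).Nonempty :=
  exists_forall_le_sq_norm_add_polyGauge (toEuclideanLin X) y hlam ι u hu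

theorem finrank_span_le_rank_of_forall_Smin_eq_singleton (hlam : 0 < lam)
    (huniq : ∀ y, ∃ b, Smin X lam (polyGauge u) y = {b}) {β : EuclideanSpace ℝ (Fin p)}
    (hacc : (rowSpace X ∩ subdiff (polyGauge u) β).Nonempty) :
    Module.finrank ℝ (Submodule.span ℝ {x | subdiff (polyGauge u) x = subdiff (polyGauge u) β})
      ≤ X.rank := by
  set L := toEuclideanLin X
  obtain ⟨s, hsrow, hs⟩ := hacc
  rw [rowSpace_eq_range_adjoint] at hsrow
  obtain ⟨z, rfl⟩ := hsrow
  rw [span_setOf_subdiff_eq, rank_eq_finrank_range_adjoint]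
  by_contra! hlt
  obtain ⟨d, hd, hd0⟩ :=
    Submodule.exists_mem_ne_zero_of_ne_bot (inf_orthogonal_ne_bot_of_finrank_lt hlt)
  obtain ⟨hdV, hdK⟩ := Submodule.mem_inf.1 hd
  rw [LinearMap.orthogonal_range, LinearMap.adjoint_adjoint, LinearMap.mem_ker] at hdK
  obtain ⟨δ, hδ, hδpos⟩ := ((eventually_subdiff_add_smul_eq u hdV).and self_mem_nhdsWithin).exists
  -- `β` and `β + δ • d` both solve the problem for the data `L β + lam • z`
  have hsol : ∀ b, L b = L β → subdiff (polyGauge u) b = subdiff (polyGauge u) β →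
      b ∈ Smin X lam (polyGauge u) (L β + lam • z) := fun b hLb hsb =>
    mem_Smin_of_adjoint_eq_smul X hlam.le (hsb ▸ hs) (by rw [hLb, add_sub_cancel_left, map_smul])
  obtain ⟨b, hb⟩ := huniq (L β + lam • z)
  have h₁ := hb ▸ hsol β rfl rfl
  have h₂ := hb ▸ hsol (β + δ • d) (by rw [map_add, map_smul, hdK, smul_zero, add_zero]) hδ
  rw [mem_singleton_iff] at h₁ h₂
  rw [← h₁, add_eq_left, smul_eq_zero] at h₂
  exact h₂.elim (ne_of_gt hδpos) hd0

theorem Smin_eq_singleton_of_forall_finrank_span_le_rank {i₀ : ι} (hu : u i₀ = 0) (hlam : 0 < lam)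
    (hcomp : ∀ β, (rowSpace X ∩ subdiff (polyGauge u) β).Nonempty →
      Module.finrank ℝ (Submodule.span ℝ {x | subdiff (polyGauge u) x = subdiff (polyGauge u) β})
        ≤ X.rank)
    (y : EuclideanSpace ℝ (Fin n)) : ∃ b, Smin X lam (polyGauge u) y = {b} := by
  set L := toEuclideanLin X
  set W := LinearMap.range L.adjoint
  have hpen := convexOn_polyGauge u
  obtain ⟨b₀, hb₀⟩ := Smin_polyGauge_nonempty u X hu hlam y
  refine ⟨b₀, eq_singleton_iff_unique_mem.2 ⟨hb₀, fun b₁ hb₁ => ?_⟩⟩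
  -- the midpoint of two solutions is a solution whose active generators do not see `b₁ - b₀`
  set m := (1 / 2 : ℝ) • b₀ + (1 / 2 : ℝ) • b₁
  have hm : m ∈ Smin X lam (polyGauge u) y :=
    convex_Smin X hpen hlam hb₀ hb₁ (by norm_num) (by norm_num) (by norm_num)
  have hperp : ∀ i ∈ activeSet u m, ⟪u i, b₁ - b₀⟫ = 0 := fun i hi => by
    rw [inner_sub_right, inner_eq_of_mem_activeSet_midpoint u
      (pen_eq_of_mem_Smin X hpen hlam hb₀ hm) (pen_eq_of_mem_Smin X hpen hlam hb₁ hm) hi, sub_self]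
  have hmW : (subdiff (polyGauge u) m ∩ W).Nonempty :=
    ⟨_, smul_adjoint_mem_subdiff_of_mem_Smin X hpen hlam hm,
      W.smul_mem _ (LinearMap.mem_range_self _ _)⟩
  obtain ⟨β, hβm, hβW, hbot⟩ := exists_subdiff_inter_nonempty_vectorSpan_inf_eq_bot u W hmW
  have hrank := hcomp β (by rwa [rowSpace_eq_range_adjoint, inter_comm])
  rw [span_setOf_subdiff_eq, rank_eq_finrank_range_adjoint] at hrank
  have hdV : b₁ - b₀ ∈ (vectorSpan ℝ (subdiff (polyGauge u) β))ᗮ :=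
    mem_orthogonal_vectorSpan_iff.2 fun g hg g' hg' =>
      (inner_eq_of_mem_subdiff u hg fun i hi => hperp i (hβm hi)).trans
        (inner_eq_of_mem_subdiff u hg' fun i hi => hperp i (hβm hi)).symm
  have hdK : b₁ - b₀ ∈ Wᗮ := by
    rw [LinearMap.orthogonal_range, LinearMap.adjoint_adjoint, LinearMap.mem_ker, map_sub,
      map_eq_of_mem_Smin X hpen hlam hb₁ hb₀, sub_self]
  have hd := orthogonal_inf_orthogonal_eq_bot hbot hrank ▸ Submodule.mem_inf.2 ⟨hdV, hdK⟩
  exact sub_eq_zero.1 ((Submodule.mem_bot ℝ).1 hd)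

end Main

/-- `S_{X,λpen}(y)` is a singleton for every `y` if and only if every `β`
whose pattern is accessible (`row(X) ∩ ∂pen(β) ≠ ∅`) has pattern complexity at most
`rank(X)`. -/
theorem uniform_uniqueness_iff_complexity {n p k : ℕ}
    (u : Fin (k + 1) → EuclideanSpace ℝ (Fin p)) (hu : u 0 = 0)
    (pen : EuclideanSpace ℝ (Fin p) → ℝ)
    (hpen : ∀ x, pen x = Finset.univ.sup' Finset.univ_nonempty fun i => ⟪u i, x⟫)
    (X : Matrix (Fin n) (Fin p) ℝ) (lam : ℝ) (hlam : 0 < lam) :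
    (∀ y : EuclideanSpace ℝ (Fin n), ∃ b, Smin X lam pen y = {b})
      ↔ ∀ β : EuclideanSpace ℝ (Fin p), (rowSpace X ∩ subdiff pen β).Nonempty →
          Module.finrank ℝ (Submodule.span ℝ {x | subdiff pen x = subdiff pen β})
            ≤ X.rank := by
  obtain rfl : pen = polyGauge u := funext hpen
  exact ⟨fun huniq _ hβ => finrank_span_le_rank_of_forall_Smin_eq_singleton u X hlam huniq hβ,
    Smin_eq_singleton_of_forall_finrank_span_le_rank u X hu hlam⟩
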